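/- arXiv:2509.00906 — 2 statements merged into one kernel-verified Lean document; each statement's English description precedes it below -/
import Mathlib

section
/- For every real number α with 0 < α < 1, the absolute values |α(α−1)(α−2)⋯(α−k+1)/k!| of the generalized binomial coefficients tend to 0 as k → ∞. -/
open Filter

/-- The generalized binomial coefficient
`C(α, k) = α(α−1)⋯(α−k+1)/k! = (∏_{j=0}^{k−1} (α − j))/k!`. -/
noncomputable def genBinom (α : ℝ) (k : ℕ) : ℝ :=
  (∏ j ∈ Finset.range k, (α - j)) / Nat.factorial k

/-- for `0 < α < 1`, the absolute values `|C(α, k)|` of the generalized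
binomial coefficients tend to `0` as `k → ∞`. -/
theorem genBinom_abs_tendsto_zero (α : ℝ) (hα0 : 0 < α) (hα1 : α < 1) :
    Tendsto (fun k : ℕ => |genBinom α k|) atTop (nhds 0) := by
  have key : ∀ k : ℕ, |genBinom α k| ≤ α / (k : ℝ) ∨ k = 0 := by
    intro k
    match k with
    | 0 => exact Or.inr rfl
    | n + 1 =>
      left
      have hprod : |∏ j ∈ Finset.range (n+1), (α - j)| ≤ α * (Nat.factorial n : ℝ) := by
        rw [Finset.abs_prod, Finset.prod_range_succ']
        push_cast
        simp only [sub_zero]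
        rw [abs_of_pos hα0]
        have h1 : ∀ j ∈ Finset.range n, |α - ((j:ℝ)+1)| ≤ ((j:ℝ)+1) := by
          intro j _
          rw [abs_sub_comm, abs_of_nonneg (by linarith [Nat.cast_nonneg (α := ℝ) j])]
          linarith [Nat.cast_nonneg (α := ℝ) j]
        have h2 : ∏ j ∈ Finset.range n, |α - ((j:ℝ)+1)| ≤ ∏ j ∈ Finset.range n, ((j:ℝ)+1) := by
          apply Finset.prod_le_prod (fun j _ => abs_nonneg _) h1
        have h3 : ∏ j ∈ Finset.range n, ((j:ℝ)+1) = (Nat.factorial n : ℝ) := by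
          exact_mod_cast congrArg (Nat.cast : ℕ → ℝ) (Finset.prod_range_add_one_eq_factorial n)
        calc (∏ j ∈ Finset.range n, |α - ((j:ℝ)+1)|) * α
            ≤ (Nat.factorial n : ℝ) * α := by
              apply mul_le_mul_of_nonneg_right _ hα0.le
              rw [← h3]; exact h2
          _ = α * (Nat.factorial n : ℝ) := mul_comm _ _
      have hfact : (Nat.factorial (n+1) : ℝ) = ((n:ℝ)+1) * (Nat.factorial n : ℝ) := by
        push_cast [Nat.factorial_succ]; ring
      rw [genBinom, abs_div, abs_of_pos (by positivity : (0:ℝ) < (Nat.factorial (n+1) : ℝ))]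
      rw [div_le_div_iff₀ (by positivity) (by exact_mod_cast Nat.succ_pos n)]
      rw [hfact]
      push_cast
      calc |∏ j ∈ Finset.range (n+1), (α - j)| * ((n:ℝ)+1)
          ≤ α * (Nat.factorial n : ℝ) * ((n:ℝ)+1) := by
            apply mul_le_mul_of_nonneg_right hprod (by positivity)
        _ = α * (((n:ℝ)+1) * (Nat.factorial n : ℝ)) := by ring
  apply squeeze_zero' (Eventually.of_forall fun k => abs_nonneg _)
  · filter_upwards [eventually_ge_atTop 1] with k hk
    rcases key k with h | h
    · exact h
    · omega
  · exact tendsto_const_div_atTop_nhds_zero_nat α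
end

section
/- Let a : ℕ → ℝ, let k ≥ 1 be a natural number, and let A be a real number. If the (C, k−1) Cesàro means γ^{(k−1)}_m := Σ_{n=1}^m (C(m+k−1−n, k−1)/C(m+k−1, k−1)) · a_n converge to A as m → ∞, then the (C, k) Cesàro means γ^{(k)}_m := Σ_{n=1}^m (C(m+k−n, k)/C(m+k, k)) · a_n also converge to A as m → ∞ (consistency of Cesàro summation: passing from the Cesàro method of order k−1 to the Cesàro method of order k preserves the generalized sum). -/
/-!
With `c j = C(j + k, k)`, the hockey-stick identity gives `∑_{j ≤ m} c j = C(m + k + 1, k + 1)`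
and `∑_{j ≤ m} c j γ⁽ᵏ⁾_j = C(m + k + 1, k + 1) γ⁽ᵏ⁺¹⁾_m`. So each `(C, k + 1)` mean is a weighted
average of the `(C, k)` means with nonnegative weights of divergent total mass, and such averages
preserve limits.
-/

open Filter Finset Topology Asymptotics

theorem Filter.Tendsto.weighted_cesaro {w u : ℕ → ℝ} {l : ℝ}
    (hu : Tendsto u atTop (𝓝 l)) (hw : ∀ i, 0 ≤ w i)
    (hw_sum : Tendsto (fun n ↦ ∑ i ∈ range n, w i) atTop atTop) :
    Tendsto (fun n ↦ (∑ i ∈ range n, w i * u i) / ∑ i ∈ range n, w i) atTop (𝓝 l) := by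
  have hlo : (fun i ↦ w i * (u i - l)) =o[atTop] w := by
    have := ((isLittleO_one_iff ℝ).2 (tendsto_sub_nhds_zero_iff.2 hu)).mul_isBigO
      (isBigO_refl w atTop)
    simpa only [mul_comm, mul_one] using this
  have hdiv := (hlo.sum_range hw hw_sum).tendsto_div_nhds_zero.add_const l
  rw [zero_add] at hdiv
  refine hdiv.congr' ?_
  filter_upwards [hw_sum.eventually_gt_atTop 0] with n hn
  simp only [mul_sub, sum_sub_distrib, ← sum_mul]
  field_simp
  ring

lemma Nat.sum_Icc_add_sub_choose (k : ℕ) {n m : ℕ} (hnm : n ≤ m) :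
    ∑ j ∈ Icc n m, (j + k - n).choose k = (m + k + 1 - n).choose (k + 1) := by
  rw [← Ico_add_one_right_eq_Icc, sum_Ico_eq_sum_range, show m + 1 - n = m - n + 1 by omega,
    show m + k + 1 - n = m - n + k + 1 by omega, ← Nat.sum_range_add_choose]
  refine sum_congr rfl fun i _ ↦ ?_
  rw [show n + i + k - n = i + k by omega]

lemma tendsto_sum_range_add_choose_atTop (k : ℕ) :
    Tendsto (fun n ↦ ∑ i ∈ range n, ((i + k).choose k : ℝ)) atTop atTop := by
  refine tendsto_atTop_mono (fun n ↦ ?_) tendsto_natCast_atTop_atTop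
  calc (n : ℝ) = ∑ _i ∈ range n, (1 : ℝ) := by simp
    _ ≤ ∑ i ∈ range n, ((i + k).choose k : ℝ) :=
      sum_le_sum fun i _ ↦ by exact_mod_cast Nat.choose_pos (Nat.le_add_left k i)

noncomputable def cesaroMean (k : ℕ) (a : ℕ → ℝ) (m : ℕ) : ℝ :=
  ∑ n ∈ Icc 1 m, (((m + k - n).choose k : ℝ) / ((m + k).choose k : ℝ)) * a n

lemma choose_mul_cesaroMean (k : ℕ) (a : ℕ → ℝ) (m : ℕ) :
    ((m + k).choose k : ℝ) * cesaroMean k a m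
      = ∑ n ∈ Icc 1 m, ((m + k - n).choose k : ℝ) * a n := by
  have hpos : ((m + k).choose k : ℝ) ≠ 0 := by
    exact_mod_cast (Nat.choose_pos (Nat.le_add_left k m)).ne'
  rw [cesaroMean, mul_sum]
  refine sum_congr rfl fun n _ ↦ ?_
  field_simp

lemma sum_range_choose_mul_cesaroMean (k : ℕ) (a : ℕ → ℝ) (m : ℕ) :
    ∑ j ∈ range (m + 1), ((j + k).choose k : ℝ) * cesaroMean k a j
      = ∑ n ∈ Icc 1 m, ((m + k + 1 - n).choose (k + 1) : ℝ) * a n := by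
  simp only [choose_mul_cesaroMean]
  rw [sum_comm' (t' := Icc 1 m) (s' := fun n ↦ Icc n m)
    (fun j n ↦ by simp only [mem_Icc, mem_range]; omega)]
  refine sum_congr rfl fun n hn ↦ ?_
  rw [← sum_mul, ← Nat.cast_sum, Nat.sum_Icc_add_sub_choose k (mem_Icc.1 hn).2]

lemma cesaroMean_succ_eq_div (k : ℕ) (a : ℕ → ℝ) (m : ℕ) :
    cesaroMean (k + 1) a m
      = (∑ j ∈ range (m + 1), ((j + k).choose k : ℝ) * cesaroMean k a j)
          / ∑ j ∈ range (m + 1), ((j + k).choose k : ℝ) := by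
  rw [sum_range_choose_mul_cesaroMean, ← Nat.cast_sum, Nat.sum_range_add_choose, cesaroMean,
    sum_div]
  refine sum_congr rfl fun n _ ↦ ?_
  rw [add_assoc, div_mul_eq_mul_div]

theorem Filter.Tendsto.cesaroMean_succ {k : ℕ} {a : ℕ → ℝ} {A : ℝ}
    (h : Tendsto (cesaroMean k a) atTop (𝓝 A)) :
    Tendsto (cesaroMean (k + 1) a) atTop (𝓝 A) := by
  have := (h.weighted_cesaro (fun i ↦ Nat.cast_nonneg _)
    (tendsto_sum_range_add_choose_atTop k)).comp (tendsto_add_atTop_nat 1)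
  simpa only [Function.comp_def, ← cesaroMean_succ_eq_div] using this

theorem cesaro_consistency_general (a : ℕ → ℝ) (k : ℕ) (A : ℝ)
    (h : Tendsto
      (fun m : ℕ =>
        ∑ n ∈ Finset.Icc 1 m,
          (((m + k - 1 - n).choose (k - 1) : ℝ) / ((m + k - 1).choose (k - 1) : ℝ)) * a n)
      atTop (nhds A)) :
    Tendsto
      (fun m : ℕ =>
        ∑ n ∈ Finset.Icc 1 m,
          (((m + k - n).choose k : ℝ) / ((m + k).choose k : ℝ)) * a n)
      atTop (nhds A) := by
  cases k with
  | zero => simpa using h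
  | succ k => exact (h : Tendsto (cesaroMean k a) atTop (𝓝 A)).cesaroMean_succ

/-- consistency of Cesàro summation.  For a real sequence `a`, `k ≥ 1`
and a real number `A`: if the `(C, k−1)` means
`γ^{(k−1)}_m = Σ_{n=1}^m (C(m+k−1−n, k−1)/C(m+k−1, k−1)) a_n` converge to `A` as
`m → ∞`, then the `(C, k)` means
`γ^{(k)}_m = Σ_{n=1}^m (C(m+k−n, k)/C(m+k, k)) a_n` also converge to `A`. -/
theorem cesaro_consistency (a : ℕ → ℝ) (k : ℕ) (hk : 1 ≤ k) (A : ℝ)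
    (h : Tendsto
      (fun m : ℕ =>
        ∑ n ∈ Finset.Icc 1 m,
          (((m + k - 1 - n).choose (k - 1) : ℝ) / ((m + k - 1).choose (k - 1) : ℝ)) * a n)
      atTop (nhds A)) :
    Tendsto
      (fun m : ℕ =>
        ∑ n ∈ Finset.Icc 1 m,
          (((m + k - n).choose k : ℝ) / ((m + k).choose k : ℝ)) * a n)
      atTop (nhds A) :=
  cesaro_consistency_general a k A h
end
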